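/- arXiv:2112.07056 — 3 statements merged into one kernel-verified Lean document; each statement's English description precedes it below -/
import Mathlib

section
/- Let p, q be positive integers with 1 ≤ q < p and c ∈ ℂ, and let r = p/q. Then the polynomial R_{p,q,c}(ζ) = (1 - r + rζ)^q - cζ^p has a real root in ((r-1)/r, 1) if and only if it has a real root greater than 1, if and only if 0 < c < 1. -/
private lemma key_ineq (r : ℝ) (hr : 1 < r) (q p : ℕ) (hq : 1 ≤ q) (hrq : r * q = p)
    (ζ : ℝ) (hζ0 : 0 < ζ) (hζ1 : ζ ≠ 1) (hpos : 0 ≤ 1 - r + r * ζ) :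
    (1 - r + r * ζ) ^ q < ζ ^ p := by
  have h1 : 1 + r * (ζ - 1) < (1 + (ζ - 1)) ^ r :=
    one_add_mul_self_lt_rpow_one_add (by linarith) (fun h => hζ1 (by linarith)) hr
  have h2 : (1 : ℝ) + (ζ - 1) = ζ := by ring
  rw [h2] at h1
  have h3 : 1 - r + r * ζ = 1 + r * (ζ - 1) := by ring
  rw [h3]
  calc (1 + r * (ζ - 1)) ^ q < (ζ ^ r) ^ q := by
        apply pow_lt_pow_left₀ h1 (by rw [← h3]; exact hpos)
        omega
    _ = ζ ^ p := by
        rw [← Real.rpow_natCast (ζ ^ r) q, ← Real.rpow_mul hζ0.le, hrq,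
          Real.rpow_natCast]

/-- let `p, q ∈ ℕ`, `1 ≤ q < p`, `r = p/q`, and let `c ∈ ℝ`. Consider the
real polynomial `R_{p,q,c}(ζ) = (1 - r + rζ)^q - cζ^p`. Then `R_{p,q,c}` has a real
root in the open interval `((r-1)/r, 1)` if and only if it has a real root greater
than `1`, if and only if `0 < c < 1`. -/
theorem root_location_iff (p q : ℕ) (hq : 1 ≤ q) (hpq : q < p) (c : ℝ) :
    ((∃ ζ : ℝ, ((p : ℝ) / q - 1) / ((p : ℝ) / q) < ζ ∧ ζ < 1 ∧
        (1 - (p : ℝ) / q + ((p : ℝ) / q) * ζ) ^ q - c * ζ ^ p = 0) ↔ (0 < c ∧ c < 1)) ∧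
    ((∃ ζ : ℝ, 1 < ζ ∧
        (1 - (p : ℝ) / q + ((p : ℝ) / q) * ζ) ^ q - c * ζ ^ p = 0) ↔ (0 < c ∧ c < 1)) := by
  set r : ℝ := (p : ℝ) / q with hr_def
  have hq0 : (0 : ℝ) < q := by exact_mod_cast hq
  have hpq' : (q : ℝ) < p := by exact_mod_cast hpq
  have hr1 : 1 < r := by
    rw [hr_def, lt_div_iff₀ hq0]; linarith
  have hr0 : 0 < r := by linarith
  have hrq : r * q = p := by
    rw [hr_def]; field_simp
  set a : ℝ := (r - 1) / r with ha_def
  have ha0 : 0 < a := div_pos (by linarith) hr0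
  have ha1 : a < 1 := by
    rw [ha_def, div_lt_one hr0]; linarith
  have hra : r * a = r - 1 := by rw [ha_def]; field_simp
  set g : ℝ → ℝ := fun ζ => (1 - r + r * ζ) ^ q - c * ζ ^ p with hg_def
  have hcont : Continuous g := by
    apply Continuous.sub <;> fun_prop
  have hga : g a = -(c * a ^ p) := by
    have h0 : 1 - r + r * a = 0 := by rw [hra]; ring
    simp only [hg_def, h0, zero_pow (by omega : q ≠ 0)]; ring
  have hg1 : g 1 = 1 - c := by
    simp [hg_def]
  -- forward direction
  have fwd : ∀ ζ : ℝ, a < ζ → ζ ≠ 1 → g ζ = 0 → 0 < c ∧ c < 1 := by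
    intro ζ hζa hζ1 hroot
    have hζ0 : 0 < ζ := lt_trans ha0 hζa
    have hpos : 0 < 1 - r + r * ζ := by
      have : r * a < r * ζ := mul_lt_mul_of_pos_left hζa hr0
      nlinarith
    have heq : c * ζ ^ p = (1 - r + r * ζ) ^ q := by
      simp only [hg_def] at hroot; linarith
    have hζp : 0 < ζ ^ p := by positivity
    have hRpos : 0 < (1 - r + r * ζ) ^ q := by positivity
    have hkey : (1 - r + r * ζ) ^ q < ζ ^ p :=
      key_ineq r hr1 q p hq hrq ζ hζ0 hζ1 hpos.le
    refine ⟨?_, ?_⟩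
    · nlinarith
    · have : c * ζ ^ p < 1 * ζ ^ p := by rw [heq]; linarith
      exact (mul_lt_mul_iff_of_pos_right hζp).mp this
  constructor
  · constructor
    · rintro ⟨ζ, h1, h2, h3⟩
      exact fwd ζ h1 (ne_of_lt h2) h3
    · rintro ⟨hc0, hc1⟩
      have h0 : (0 : ℝ) ∈ Set.Ioo (g a) (g 1) := by
        rw [hga, hg1]
        constructor
        · have : 0 < c * a ^ p := by positivity
          linarith
        · linarith
      obtain ⟨ζ, hζ, hgζ⟩ := intermediate_value_Ioo ha1.le hcont.continuousOn h0
      exact ⟨ζ, hζ.1, hζ.2, hgζ⟩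
  · constructor
    · rintro ⟨ζ, h1, h3⟩
      exact fwd ζ (lt_trans ha1 h1) (ne_of_gt h1) h3
    · rintro ⟨hc0, hc1⟩
      set M : ℝ := max 2 (r ^ q / c + 1) with hM_def
      have hM2 : (2 : ℝ) ≤ M := le_max_left _ _
      have hM1 : (1 : ℝ) < M := by linarith
      have hMc : r ^ q < c * M := by
        have h := le_max_right 2 (r ^ q / c + 1)
        rw [← hM_def] at h
        have : r ^ q / c < M := by linarith
        calc r ^ q = (r ^ q / c) * c := by field_simp
          _ < M * c := by exact mul_lt_mul_of_pos_right this hc0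
          _ = c * M := by ring
      have hgM : g M < 0 := by
        have hMpos : (0 : ℝ) < M := by linarith
        have hb1 : (1 - r + r * M) ^ q ≤ (r * M) ^ q := by
          apply pow_le_pow_left₀
          · nlinarith
          · nlinarith
        have hMq : (0 : ℝ) < M ^ q := by positivity
        have hb2 : (r * M) ^ q = r ^ q * M ^ q := mul_pow r M q
        have hb3 : r ^ q * M ^ q < c * M * M ^ q :=
          mul_lt_mul_of_pos_right hMc hMq
        have hb4 : M ≤ M ^ (p - q) := by
          calc M = M ^ 1 := (pow_one M).symm
            _ ≤ M ^ (p - q) := pow_le_pow_right₀ hM1.le (by omega)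
        have hb5 : c * M * M ^ q ≤ c * M ^ (p - q) * M ^ q := by
          have : c * M ≤ c * M ^ (p - q) := mul_le_mul_of_nonneg_left hb4 hc0.le
          exact mul_le_mul_of_nonneg_right this hMq.le
        have hb6 : M ^ (p - q) * M ^ q = M ^ p := by
          rw [← pow_add]; congr 1; omega
        simp only [hg_def]
        nlinarith
      have h0 : (0 : ℝ) ∈ Set.Ioo (g M) (g 1) := by
        rw [hg1]; exact ⟨hgM, by linarith⟩
      obtain ⟨ζ, hζ, hgζ⟩ := intermediate_value_Ioo' hM1.le hcont.continuousOn h0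
      exact ⟨ζ, hζ.1, hgζ⟩
end

section
/- The rational function R(z,w) = (w - z²)² / ((w + 3z²)(z - w)(z - 1)) is a first integral of the dual billiard on the parabola γ = {w = z²} defined by the involution family σ_P : u ↦ -u/(1 + f(z₀)u), f(z) = (5z-3)/(2z(z-1)), u = z - z₀: for every P = (z₀, z₀²) with z₀ ∉ {0,1}, the restriction of R to the tangent line L_P = {w = 2z₀z - z₀²} satisfies R ∘ σ_P = R on L_P. -/
/-- The rational function `R(z,w) = (w - z²)² / ((w + 3z²)(z - w)(z - 1))`. -/
noncomputable def Rb1 (z w : ℂ) : ℂ :=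
  (w - z ^ 2) ^ 2 / ((w + 3 * z ^ 2) * (z - w) * (z - 1))

/-- `f(z) = (5z - 3)/(2z(z-1))`. -/
noncomputable def fb1 (z : ℂ) : ℂ := (5 * z - 3) / (2 * z * (z - 1))

/-- The dual billiard involution on the tangent line, in the coordinate `u = z - z₀`. -/
noncomputable def sigmaU (f u : ℂ) : ℂ := -u / (1 + f * u)

/-- The point of the tangent line `L_P = {w = 2z₀ z - z₀²}` to the parabola `{w = z²}`
at `P = (z₀, z₀²)` with coordinate `u = z - z₀`. -/
noncomputable def linePt (z₀ u : ℂ) : ℂ × ℂ := (z₀ + u, z₀ ^ 2 + 2 * z₀ * u)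

/-!
On `L_P` the numerator `(w - z²)²` of `R` is `u⁴`, and the denominator is a quartic in `u` with
roots `-2z₀`, `z₀(z₀-1)/(1-2z₀)`, `-2z₀/3`, `1-z₀`; `σ_P` swaps the first two and the last two.
Hence each of the two corresponding quadratic factors `Q`, written homogeneously in `(u : t)`,
satisfies `Q(-u, 1 + f u) = Q(u, 1)`, so under `σ_P` the denominator, like the numerator,
is multiplied by `(1 + f u)⁻⁴`.
-/

def tangentQuadA (z₀ u t : ℂ) : ℂ := (u + 2 * z₀ * t) * ((1 - 2 * z₀) * u + z₀ * (1 - z₀) * t)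

def tangentQuadB (z₀ u t : ℂ) : ℂ := (3 * u + 2 * z₀ * t) * (u + (z₀ - 1) * t)

theorem Rb1_linePt (z₀ u : ℂ) :
    Rb1 (linePt z₀ u).1 (linePt z₀ u).2 = u ^ 4 / (tangentQuadA z₀ u 1 * tangentQuadB z₀ u 1) := by
  simp only [Rb1, linePt, tangentQuadA, tangentQuadB]
  congr 1 <;> ring

theorem tangentQuadA_div {t : ℂ} (ht : t ≠ 0) (z₀ u : ℂ) :
    tangentQuadA z₀ (u / t) 1 = tangentQuadA z₀ u t / t ^ 2 := by
  simp only [tangentQuadA]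
  field_simp

theorem tangentQuadB_div {t : ℂ} (ht : t ≠ 0) (z₀ u : ℂ) :
    tangentQuadB z₀ (u / t) 1 = tangentQuadB z₀ u t / t ^ 2 := by
  simp only [tangentQuadB]
  field_simp

theorem tangentQuadA_neg_one_add_mul {z₀ f : ℂ} (hf : f * (2 * z₀ * (z₀ - 1)) = 5 * z₀ - 3)
    (u : ℂ) :
    tangentQuadA z₀ (-u) (1 + f * u) = tangentQuadA z₀ u 1 := by
  simp only [tangentQuadA]
  linear_combination (-z₀ * u * (2 + f * u)) * hf

theorem tangentQuadB_neg_one_add_mul {z₀ f : ℂ} (hf : f * (2 * z₀ * (z₀ - 1)) = 5 * z₀ - 3)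
    (u : ℂ) :
    tangentQuadB z₀ (-u) (1 + f * u) = tangentQuadB z₀ u 1 := by
  simp only [tangentQuadB]
  linear_combination (u * (2 + f * u)) * hf

theorem Rb1_linePt_sigmaU {z₀ f u : ℂ} (hf : f * (2 * z₀ * (z₀ - 1)) = 5 * z₀ - 3)
    (hu : 1 + f * u ≠ 0) :
    Rb1 (linePt z₀ (sigmaU f u)).1 (linePt z₀ (sigmaU f u)).2
      = Rb1 (linePt z₀ u).1 (linePt z₀ u).2 := by
  rw [Rb1_linePt, Rb1_linePt, sigmaU, tangentQuadA_div hu, tangentQuadB_div hu,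
    tangentQuadA_neg_one_add_mul hf, tangentQuadB_neg_one_add_mul hf, div_mul_div_comm,
    ← pow_add, div_pow, Even.neg_pow (by decide)]
  exact div_div_div_cancel_right₀ (pow_ne_zero _ hu) _ _

theorem Rb1_is_integral_general (z₀ : ℂ) (h0 : z₀ ≠ 0) (h1 : z₀ ≠ 1) (u : ℂ)
    (hu : 1 + fb1 z₀ * u ≠ 0) :
    Rb1 (linePt z₀ (sigmaU (fb1 z₀) u)).1 (linePt z₀ (sigmaU (fb1 z₀) u)).2
      = Rb1 (linePt z₀ u).1 (linePt z₀ u).2 := by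
  have hc : 2 * z₀ * (z₀ - 1) ≠ 0 := by
    simp [h0, sub_ne_zero.mpr h1]
  exact Rb1_linePt_sigmaU (div_mul_cancel₀ _ hc) hu

/-- the rational function `R(z,w) = (w-z²)²/((w+3z²)(z-w)(z-1))` is a
first integral of the dual billiard on the parabola `γ = {w = z²}` defined by the
involution family `σ_P : u ↦ -u/(1 + f(z₀)u)`, `f(z) = (5z-3)/(2z(z-1))`: for every
`P = (z₀, z₀²)` with `z₀ ∉ {0,1}`, one has `R ∘ σ_P = R` on the tangent line `L_P`
(at every point of `L_P` where both sides are defined). -/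
theorem Rb1_is_integral (z₀ : ℂ) (h0 : z₀ ≠ 0) (h1 : z₀ ≠ 1) (u : ℂ)
    (hu : 1 + fb1 z₀ * u ≠ 0)
    (hden : ((linePt z₀ u).2 + 3 * (linePt z₀ u).1 ^ 2) *
        ((linePt z₀ u).1 - (linePt z₀ u).2) * ((linePt z₀ u).1 - 1) ≠ 0)
    (hden' : ((linePt z₀ (sigmaU (fb1 z₀) u)).2 + 3 * (linePt z₀ (sigmaU (fb1 z₀) u)).1 ^ 2) *
        ((linePt z₀ (sigmaU (fb1 z₀) u)).1 - (linePt z₀ (sigmaU (fb1 z₀) u)).2) *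
        ((linePt z₀ (sigmaU (fb1 z₀) u)).1 - 1) ≠ 0) :
    Rb1 (linePt z₀ (sigmaU (fb1 z₀) u)).1 (linePt z₀ (sigmaU (fb1 z₀) u)).2
      = Rb1 (linePt z₀ u).1 (linePt z₀ u).2 :=
  Rb1_is_integral_general z₀ h0 h1 u hu
end

section
/- Let f(x, y) be a function defined on a neighborhood of the origin in ℝ² (or ℂ²) which, for each fixed y, is a rational function of x, and for each fixed x is a rational function of y of degree at most d (with d uniform). Then f is a rational function of the two variables jointly, i.e. f = P(x,y)/Q(x,y) for polynomials P, Q. -/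
/-!
Fix `2d + 1` distinct heights `t_j` and write `f(·, t_j) = p_j / q_j`. The `2d + 1` conditions
`q_j(x) A(x, t_j) = p_j(x) B(x, t_j)` on a pair `A, B ∈ ℝ[x][y]` of `y`-degree at most `d` are
linear over `ℝ[x]` in `2d + 2` unknown coefficients, so they have a nonzero solution. For each
fixed `x`, both `A(x, ·) / B(x, ·)` and `f(x, ·) = p / q` take the values `f(x, t_j)`, so
`A(x, ·) q - B(x, ·) p`, of degree at most `2d`, vanishes at `2d + 1` points and hence
identically: `f = A / B`. Finally `B ≠ 0`, for otherwise `A(x, ·) q = 0` forces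
`A(x, ·) = 0` for every `x`, i.e. `A = 0`.
-/

open Polynomial Polynomial.Bivariate

namespace Polynomial

theorem exists_natDegree_le_forall_mul_eval_eq_mul_eval {R ι : Type*} [CommRing R]
    [Nontrivial R] [Fintype ι] (d : ℕ) (hι : Fintype.card ι < 2 * (d + 1)) (s u w : ι → R) :
    ∃ A B : R[X], (A, B) ≠ 0 ∧ A.natDegree ≤ d ∧ B.natDegree ≤ d ∧
      ∀ j, u j * A.eval (s j) = w j * B.eval (s j) := by
  classical
  let coeffs : (Fin (d + 1) ⊕ Fin (d + 1) → R) →ₗ[R] R[X] × R[X] :=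
    (ofFn (d + 1)).prodMap (ofFn (d + 1)) ∘ₗ
      (LinearEquiv.sumArrowLequivProdArrow _ _ R R).toLinearMap
  let Φ : (Fin (d + 1) ⊕ Fin (d + 1) → R) →ₗ[R] ι → R := LinearMap.pi fun j =>
    (u j • leval (s j) ∘ₗ LinearMap.fst R R[X] R[X] -
      w j • leval (s j) ∘ₗ LinearMap.snd R R[X] R[X]) ∘ₗ coeffs
  obtain ⟨v, hv, hΦv⟩ : ∃ v, v ≠ 0 ∧ Φ v = 0 := by
    by_contra! h
    have := card_le_of_injective R Φ
      ((injective_iff_map_eq_zero Φ).mpr fun v hv => by_contra fun h' => h v h' hv)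
    simp only [Fintype.card_sum, Fintype.card_fin] at this
    omega
  have hcoeffs : Function.Injective coeffs :=
    ((injective_ofFn _).prodMap (injective_ofFn _)).comp (LinearEquiv.injective _)
  refine ⟨(coeffs v).1, (coeffs v).2, (map_ne_zero_iff _ hcoeffs).mpr hv,
    Nat.le_of_lt_succ (ofFn_natDegree_lt d.succ_pos _),
    Nat.le_of_lt_succ (ofFn_natDegree_lt d.succ_pos _), fun j => ?_⟩
  simpa [Φ, sub_eq_zero] using congrFun hΦv j

theorem mul_eq_mul_of_forall_eval_eq_mul_eval {R ι : Type*} [CommRing R] [IsDomain R]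
    [Fintype ι] {t : ι → R} (ht : Function.Injective t) {d : ℕ} (hι : 2 * d < Fintype.card ι)
    {a b p q : R[X]} (ha : a.natDegree ≤ d) (hb : b.natDegree ≤ d) (hp : p.natDegree ≤ d)
    (hq : q.natDegree ≤ d) (c : ι → R) (hab : ∀ j, a.eval (t j) = c j * b.eval (t j))
    (hpq : ∀ j, p.eval (t j) = c j * q.eval (t j)) : a * q = b * p := by
  refine sub_eq_zero.mp (eq_zero_of_natDegree_lt_card_of_eval_eq_zero _ ht (fun j => ?_) ?_)
  · simp only [eval_sub, eval_mul, hab, hpq]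
    ring
  · refine (natDegree_sub_le _ _).trans_lt (max_lt ?_ ?_) <;>
      exact natDegree_mul_le.trans_lt (by omega)

theorem eq_zero_of_forall_map_evalRingHom_eq_zero {R : Type*} [CommRing R] [IsDomain R]
    {F : R[X][X]} {s : Set R} (hs : s.Infinite) (h : ∀ x ∈ s, F.map (evalRingHom x) = 0) :
    F = 0 := by
  ext1 n
  refine eq_zero_of_infinite_isRoot _ (hs.mono fun x hx => ?_)
  simpa using congrArg (coeff · n) (h x hx)

theorem Bivariate.eval_equivMvPolynomial {R : Type*} [CommRing R] (x y : R) (F : R[X][X]) :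
    MvPolynomial.eval ![x, y] (equivMvPolynomial R F) = F.evalEval x y := by
  rw [← coe_aevalAeval_eq_evalEval, ← MvPolynomial.coe_aeval_eq_eval]
  show ((MvPolynomial.aeval ![x, y]).comp (equivMvPolynomial R).toAlgHom) F = _
  congr 1
  ext <;> simp [equivMvPolynomial]

end Polynomial

theorem exists_natDegree_le_forall_evalEval_eq_mul_evalEval {K ι : Type*} [Field K]
    [Fintype ι] (d : ℕ) (hι : Fintype.card ι < 2 * (d + 1)) (S : Set K) (f : K → K → K)
    (t : ι → K) (hf : ∀ j, ∃ p q : K[X], (∀ x ∈ S, q.eval x ≠ 0) ∧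
      ∀ x ∈ S, f x (t j) = p.eval x / q.eval x) :
    ∃ A B : K[X][X], (A, B) ≠ 0 ∧ A.natDegree ≤ d ∧ B.natDegree ≤ d ∧
      ∀ x ∈ S, ∀ j, A.evalEval x (t j) = f x (t j) * B.evalEval x (t j) := by
  choose p q hq hpq using hf
  obtain ⟨A, B, hAB, hA, hB, hsample⟩ :=
    exists_natDegree_le_forall_mul_eval_eq_mul_eval d hι (fun j => C (t j)) q p
  refine ⟨A, B, hAB, hA, hB, fun x hx j => ?_⟩
  have := congrArg (eval x) (hsample j)
  simp only [eval_mul] at this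
  rw [hpq j x hx, div_mul_eq_mul_div, eq_div_iff (hq j x hx)]
  linear_combination this

/-- let `f(x,y)` be a function defined on a neighborhood of the origin in
`ℝ²` which, for each fixed `y`, is a rational function of `x`, and, for each fixed `x`,
is a rational function of `y` of degree at most `d` (with `d` uniform). Then `f` is a
rational function of the two variables jointly: `f = P(x,y)/Q(x,y)` on the neighborhood,
for some polynomials `P, Q` in two variables. -/
theorem rational_in_each_variable_implies_rational (d : ℕ) (f : ℝ → ℝ → ℝ) (ε : ℝ)
    (hε : 0 < ε)
    (hx : ∀ y : ℝ, |y| < ε → ∃ p q : Polynomial ℝ,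
      (∀ x : ℝ, |x| < ε → q.eval x ≠ 0) ∧
      (∀ x : ℝ, |x| < ε → f x y = p.eval x / q.eval x))
    (hy : ∀ x : ℝ, |x| < ε → ∃ p q : Polynomial ℝ,
      p.natDegree ≤ d ∧ q.natDegree ≤ d ∧
      (∀ y : ℝ, |y| < ε → q.eval y ≠ 0) ∧
      (∀ y : ℝ, |y| < ε → f x y = p.eval y / q.eval y)) :
    ∃ P Q : MvPolynomial (Fin 2) ℝ, Q ≠ 0 ∧
      ∀ x y : ℝ, |x| < ε → |y| < ε → MvPolynomial.eval ![x, y] Q ≠ 0 →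
        f x y = MvPolynomial.eval ![x, y] P / MvPolynomial.eval ![x, y] Q := by
  have hS : {x : ℝ | |x| < ε}.Infinite :=
    (Set.Ioo_infinite (by linarith)).mono fun x hx => abs_lt.mpr hx
  let t : Fin (2 * d + 1) → ℝ := fun j => hS.natEmbedding _ j
  have ht : Function.Injective t :=
    Subtype.val_injective.comp ((hS.natEmbedding _).injective.comp Fin.val_injective)
  have htε : ∀ j, |t j| < ε := fun j => (hS.natEmbedding _ j).2
  obtain ⟨A, B, hAB, hA, hB, hsample⟩ := exists_natDegree_le_forall_evalEval_eq_mul_evalEval d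
    (by simp only [Fintype.card_fin]; omega) _ f t fun j => hx (t j) (htε j)
  choose! p q hp hq hq0 hpq using hy
  have hcross : ∀ x, |x| < ε → A.map (evalRingHom x) * q x = B.map (evalRingHom x) * p x :=
    fun x hxε => mul_eq_mul_of_forall_eval_eq_mul_eval ht (by simp)
      (natDegree_map_le.trans hA) (natDegree_map_le.trans hB) (hp x hxε) (hq x hxε)
      (fun j => f x (t j)) (fun j => by simpa only [map_evalRingHom_eval] using hsample x hxε j)
      (fun j => by rw [hpq x hxε _ (htε j), div_mul_cancel₀ _ (hq0 x hxε _ (htε j))])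
  refine ⟨equivMvPolynomial ℝ A, equivMvPolynomial ℝ B,
    (map_ne_zero_iff _ (equivMvPolynomial ℝ).injective).mpr fun hB0 => hAB ?_, ?_⟩
  · refine Prod.ext (eq_zero_of_forall_map_evalRingHom_eq_zero hS fun x hxε => ?_) hB0
    have hqx : q x ≠ 0 := fun h => hq0 x hxε 0 (by simpa using hε) (by simp [h])
    simpa [hB0, hqx] using hcross x hxε
  · intro x y hxε hyε hB
    rw [eval_equivMvPolynomial] at hB ⊢
    rw [eval_equivMvPolynomial, hpq x hxε y hyε, div_eq_div_iff (hq0 x hxε y hyε) hB]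
    have := congrArg (eval y) (hcross x hxε)
    simp only [eval_mul, map_evalRingHom_eval] at this
    linear_combination -this
end
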